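/- Define q̃(x) = x − e^{-x²}/(a_0 − ∫_0^x e^{-s²} ds) with a_0 = √π/2. Then for every m ≥ 1 the perturbed vector function Ṽ with components Ṽ₁(x) = V₁(x) and Ṽ₂(x) = V₂(x) + e^{-x²/2}·(∫_0^x e^{-s²/2} V₂(s) ds)/(a_0 − ∫_0^x e^{-s²} ds) satisfies the perturbed Dirac system −Ṽ₁' + q̃ Ṽ₁ = λ Ṽ₂ and Ṽ₂' + q̃ Ṽ₂ = λ Ṽ₁, whenever (V₁, V₂) satisfies the original system −V₁' + x V₁ = λ V₂, V₂' + x V₂ = λ V₁ with λ ≠ 0 and boundary value V₁(0) = 0, assuming a_0 − ∫_0^x e^{-s²} ds > 0 for all x ≥ 0. -/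

import Mathlib

/-!
Write `D(x) = a₀ - ∫₀ˣ e^{-s²} = ∫ₓ^∞ e^{-s²} > 0` and `R = e^{-x²/2} H / D` with
`H(x) = ∫₀ˣ e^{-s²/2} V₂`, so that `Ṽ₂ = V₂ + R`. Since `D' = -e^{-x²}` and
`x - q̃ = e^{-x²} / D`, the correction satisfies `R' + q̃ R = (x - q̃) V₂`, which turns the
second equation for `V` into the second one for `Ṽ`. For the first, the integrating factor
`e^{-x²/2}` turns `-V₁' + x V₁ = λ V₂` into `(e^{-x²/2} V₁)' = -λ e^{-x²/2} V₂`, so `V₁(0) = 0` gives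
`λ H = -e^{-x²/2} V₁`, i.e. `λ R = (q̃ - x) V₁`.
-/

noncomputable def a₀ : ℝ := Real.sqrt Real.pi / 2

noncomputable def qtilde (x : ℝ) : ℝ :=
  x - Real.exp (-x ^ 2) / (a₀ - ∫ s in (0 : ℝ)..x, Real.exp (-s ^ 2))

open Real Set MeasureTheory intervalIntegral

noncomputable def gaussianTail (x : ℝ) : ℝ := a₀ - ∫ s in (0 : ℝ)..x, exp (-s ^ 2)

lemma integrableOn_exp_neg_sq_Ioi (x : ℝ) :
    IntegrableOn (fun s : ℝ => exp (-s ^ 2)) (Ioi x) := by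
  simpa using (integrable_exp_neg_mul_sq one_pos).integrableOn

lemma gaussianTail_eq_integral_Ioi (x : ℝ) : gaussianTail x = ∫ s in Ioi x, exp (-s ^ 2) := by
  have h := integral_gaussian_Ioi 1
  simp only [neg_one_mul, div_one] at h
  rw [gaussianTail, a₀, ← h, ← integral_Ioi_sub_Ioi' (integrableOn_exp_neg_sq_Ioi 0)
    (integrableOn_exp_neg_sq_Ioi x)]
  ring

lemma gaussianTail_pos (x : ℝ) : 0 < gaussianTail x := by
  rw [gaussianTail_eq_integral_Ioi, setIntegral_pos_iff_support_of_nonneg_ae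
    (.of_forall fun s => (exp_pos _).le) (integrableOn_exp_neg_sq_Ioi x)]
  simp [Function.support, (exp_pos _).ne']

lemma hasDerivAt_gaussianTail (x : ℝ) : HasDerivAt gaussianTail (-exp (-x ^ 2)) x := by
  have h : Continuous fun s : ℝ => exp (-s ^ 2) := by fun_prop
  exact (h.integral_hasStrictDerivAt 0 x).hasDerivAt.const_sub a₀

lemma exp_neg_sq_div_two_sq (x : ℝ) : exp (-x ^ 2 / 2) ^ 2 = exp (-x ^ 2) := by
  rw [← exp_nat_mul]
  ring_nf

lemma qtilde_eq_sub_div_gaussianTail (x : ℝ) : qtilde x = x - exp (-x ^ 2 / 2) ^ 2 / gaussianTail x := by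
  rw [exp_neg_sq_div_two_sq, qtilde, gaussianTail]

lemma hasDerivAt_exp_neg_sq_div_two (x : ℝ) :
    HasDerivAt (fun u => exp (-u ^ 2 / 2)) (-x * exp (-x ^ 2 / 2)) x := by
  have h : HasDerivAt (fun u : ℝ => -u ^ 2 / 2) (-x) x :=
    ((hasDerivAt_pow 2 x).fun_neg.div_const 2).congr_deriv (by push_cast; ring)
  simpa [mul_comm] using h.exp

lemma integral_exp_neg_sq_div_two_mul_eq {V W : ℝ → ℝ}
    (hV : ∀ x, HasDerivAt V (x * V x - W x) x) (hW : Continuous W) (x : ℝ) :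
    ∫ s in (0 : ℝ)..x, exp (-s ^ 2 / 2) * W s = V 0 - exp (-x ^ 2 / 2) * V x := by
  have hderiv : ∀ s, HasDerivAt (fun u => -(exp (-u ^ 2 / 2) * V u)) (exp (-s ^ 2 / 2) * W s) s :=
    fun s => ((hasDerivAt_exp_neg_sq_div_two s).mul (hV s)).neg.congr_deriv (by ring)
  rw [integral_eq_sub_of_hasDerivAt (fun s _ => hderiv s)
    ((by fun_prop : Continuous fun s => exp (-s ^ 2 / 2) * W s).intervalIntegrable _ _)]
  simp only [ne_eq, OfNat.ofNat_ne_zero, not_false_eq_true, zero_pow, neg_zero, zero_div, exp_zero,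
    one_mul]
  ring

noncomputable def perturbationTerm (W : ℝ → ℝ) (x : ℝ) : ℝ :=
  exp (-x ^ 2 / 2) * (∫ s in (0 : ℝ)..x, exp (-s ^ 2 / 2) * W s) / gaussianTail x

lemma const_mul_perturbationTerm_eq {V W : ℝ → ℝ} {c : ℝ}
    (hV : ∀ x, HasDerivAt V (x * V x - c * W x) x) (hW : Continuous W) (hV₀ : V 0 = 0)
    (x : ℝ) : c * perturbationTerm W x = (qtilde x - x) * V x := by
  have h := integral_exp_neg_sq_div_two_mul_eq hV (continuous_const.mul hW) x
  simp only [mul_left_comm _ c, intervalIntegral.integral_const_mul, hV₀, zero_sub] at h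
  rw [perturbationTerm, mul_div_assoc', mul_left_comm c, h, qtilde_eq_sub_div_gaussianTail]
  ring

lemma hasDerivAt_perturbationTerm {W : ℝ → ℝ} (hW : Continuous W) (x : ℝ) :
    HasDerivAt (perturbationTerm W)
      ((x - qtilde x) * W x - qtilde x * perturbationTerm W x) x := by
  have hint : Continuous fun s => exp (-s ^ 2 / 2) * W s := by fun_prop
  have hnum := (hasDerivAt_exp_neg_sq_div_two x).mul (hint.integral_hasStrictDerivAt 0 x).hasDerivAt
  refine (hnum.div (hasDerivAt_gaussianTail x) (gaussianTail_pos x).ne').congr_deriv ?_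
  have hD := (gaussianTail_pos x).ne'
  rw [perturbationTerm, qtilde_eq_sub_div_gaussianTail, ← exp_neg_sq_div_two_sq, Pi.mul_apply]
  field_simp
  ring

theorem perturbed_dirac_system_general (l : ℝ) (V₁ V₂ : ℝ → ℝ)
    (hV₁ : Differentiable ℝ V₁) (hV₂ : Differentiable ℝ V₂)
    (hbc : V₁ 0 = 0)
    (h1 : ∀ x, -deriv V₁ x + x * V₁ x = l * V₂ x)
    (h2 : ∀ x, deriv V₂ x + x * V₂ x = l * V₁ x) :
    let Vt₁ : ℝ → ℝ := V₁
    let Vt₂ : ℝ → ℝ := fun x => V₂ x +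
      Real.exp (-x ^ 2 / 2) * (∫ s in (0 : ℝ)..x, Real.exp (-s ^ 2 / 2) * V₂ s) /
        (a₀ - ∫ s in (0 : ℝ)..x, Real.exp (-s ^ 2))
    ∀ x, -deriv Vt₁ x + qtilde x * Vt₁ x = l * Vt₂ x ∧
         deriv Vt₂ x + qtilde x * Vt₂ x = l * Vt₁ x := by
  intro Vt₁ Vt₂ x
  have hV₁' : ∀ y, HasDerivAt V₁ (y * V₁ y - l * V₂ y) y := fun y =>
    (hV₁ y).hasDerivAt.congr_deriv (by linarith [h1 y])
  have hV₂' : HasDerivAt V₂ (l * V₁ x - x * V₂ x) x :=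
    (hV₂ x).hasDerivAt.congr_deriv (by linarith [h2 x])
  have hVt₂ : Vt₂ = fun y => V₂ y + perturbationTerm V₂ y := rfl
  rw [hVt₂]
  constructor
  · linear_combination h1 x - const_mul_perturbationTerm_eq hV₁' hV₂.continuous hbc x
  · rw [(hV₂'.fun_add (hasDerivAt_perturbationTerm hV₂.continuous x)).deriv]
    ring

theorem perturbed_dirac_system (l : ℝ) (hl : l ≠ 0) (V₁ V₂ : ℝ → ℝ)
    (hV₁ : Differentiable ℝ V₁) (hV₂ : Differentiable ℝ V₂)
    (hbc : V₁ 0 = 0)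
    (hpos : ∀ x : ℝ, 0 ≤ x → a₀ - (∫ s in (0 : ℝ)..x, Real.exp (-s ^ 2)) > 0)
    (h1 : ∀ x, -deriv V₁ x + x * V₁ x = l * V₂ x)
    (h2 : ∀ x, deriv V₂ x + x * V₂ x = l * V₁ x) :
    let Vt₁ : ℝ → ℝ := V₁
    let Vt₂ : ℝ → ℝ := fun x => V₂ x +
      Real.exp (-x ^ 2 / 2) * (∫ s in (0 : ℝ)..x, Real.exp (-s ^ 2 / 2) * V₂ s) /
        (a₀ - ∫ s in (0 : ℝ)..x, Real.exp (-s ^ 2))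
    ∀ x, -deriv Vt₁ x + qtilde x * Vt₁ x = l * Vt₂ x ∧
         deriv Vt₂ x + qtilde x * Vt₂ x = l * Vt₁ x :=
  perturbed_dirac_system_general l V₁ V₂ hV₁ hV₂ hbc h1 h2
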